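/- Let c : X → ℝ be continuous and let φ = (φ_1,…,φ_N) be a solution of the Schrödinger system for (c,(μ_1,…,μ_N)). Then the measure γ on X with density x ↦ exp(Σ_{i=1}^N φ_i(x_i) − c(x)) with respect to μ = μ_1 ⊗ ⋯ ⊗ μ_N is a Borel probability measure, and for every i the pushforward of γ under the projection x ↦ x_i equals μ_i. -/

import Mathlib

/-!
Write `ρ(x) = exp(Σ_j φ_j(x_j) − c(x))`. Freezing `x_i = t` splits `ρ` as `exp(φ_i(t))` times the
integrand of the `i`-th Schrödinger equation, so that equation says exactly that the fibre integral
`∫ ρ(x with x_i = t) dμ(x)` equals `1` for `t ∈ X_i`; compactness and continuity make the integrand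
bounded, so the integral is finite and positive and the logarithm can be inverted. By Tonelli, the
`i`-th marginal of `ρ · μ` is `μ_i` weighted by these fibre integrals, i.e. `μ_i` itself, and a
measure with a probability marginal is a probability measure.
-/

open MeasureTheory Set

noncomputable section

/-- `φ = (φ_1,…,φ_N)` is a solution of the Schrödinger system for the cost `c` and the
marginals `μ = (μ_1,…,μ_N)`: each `φ i` is continuous on `X i` and the Schrödinger
equations hold at every point of `X i`. (Since each `μ j` is a probability measure
concentrated on `X j`, integrating over the full product measure `Measure.pi μ` an
integrand that does not depend on the `i`-th coordinate is the same as integrating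
over `⊗_{j≠i} μ j`.) -/
def IsSchrodingerSolution {N d : ℕ} (X : Fin N → Set (EuclideanSpace ℝ (Fin d)))
    (c : (Fin N → EuclideanSpace ℝ (Fin d)) → ℝ)
    (μ : Fin N → MeasureTheory.Measure (EuclideanSpace ℝ (Fin d)))
    (φ : Fin N → EuclideanSpace ℝ (Fin d) → ℝ) : Prop :=
  (∀ i, ContinuousOn (φ i) (X i)) ∧
  ∀ i : Fin N, ∀ xi ∈ X i,
    φ i xi = - Real.log (∫ y, Real.exp ((∑ j ∈ Finset.univ.erase i, φ j (y j))
      - c (Function.update y i xi)) ∂(MeasureTheory.Measure.pi μ))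

open Function

section ProductSlices

variable {ι : Type*} [Fintype ι] [DecidableEq ι] {α : ι → Type*} [∀ j, MeasurableSpace (α j)]
  (μ : ∀ j, Measure (α j)) [∀ j, SigmaFinite (μ j)]

theorem lintegral_pi_eq_lintegral_lintegral_update (i : ι) [IsProbabilityMeasure (μ i)]
    {F : (∀ j, α j) → ENNReal} (hF : Measurable F) :
    ∫⁻ x, F x ∂Measure.pi μ = ∫⁻ t, ∫⁻ x, F (update x i t) ∂Measure.pi μ ∂μ i := by
  have hF' : Measurable (uncurry fun t x => F (update x i t)) :=
    hF.comp (measurable_update'.comp measurable_swap)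
  rw [lintegral_lintegral_swap hF'.aemeasurable, ← lmarginal_singleton]
  refine lintegral_eq_of_lmarginal_eq {i} hF (hF.lmarginal μ) ?_
  ext x
  simp [lmarginal_singleton]

theorem map_eval_withDensity_pi (i : ι) [IsProbabilityMeasure (μ i)]
    {F : (∀ j, α j) → ENNReal} (hF : Measurable F) :
    ((Measure.pi μ).withDensity F).map (fun x => x i)
      = (μ i).withDensity (fun t => ∫⁻ x, F (update x i t) ∂Measure.pi μ) := by
  ext A hA
  have hA' : MeasurableSet ((fun x : ∀ j, α j => x i) ⁻¹' A) := measurable_pi_apply i hA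
  rw [Measure.map_apply (measurable_pi_apply i) hA, withDensity_apply _ hA',
    withDensity_apply _ hA, ← lintegral_indicator hA', ← lintegral_indicator hA,
    lintegral_pi_eq_lintegral_lintegral_update μ i (hF.indicator hA')]
  refine lintegral_congr fun t => ?_
  by_cases ht : t ∈ A <;> simp [ht, indicator]

end ProductSlices

theorem ContinuousOn.integrable_of_ae_mem {α E : Type*} [TopologicalSpace α] [T2Space α]
    [MeasurableSpace α] [OpensMeasurableSpace α] [NormedAddCommGroup E] {μ : Measure α}
    [IsFiniteMeasureOnCompacts μ] {f : α → E} {K : Set α} (hK : IsCompact K)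
    (hf : ContinuousOn f K) (hae : ∀ᵐ x ∂μ, x ∈ K) : Integrable f μ := by
  simpa only [IntegrableOn, Measure.restrict_eq_self_of_ae_mem hae] using
    hf.integrableOn_compact (μ := μ) hK

theorem ae_mem_univ_pi {ι : Type*} [Fintype ι] {α : ι → Type*} [∀ j, MeasurableSpace (α j)]
    {μ : ∀ j, Measure (α j)} [∀ j, IsProbabilityMeasure (μ j)] {X : ∀ j, Set (α j)}
    (hX : ∀ j, MeasurableSet (X j)) (hμX : ∀ j, μ j (X j) = 1) :
    ∀ᵐ x ∂Measure.pi μ, x ∈ univ.pi X :=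
  Measure.ae_pi_le_pi <| Filter.pi_mem_pi finite_univ fun j _ =>
    (mem_ae_iff_prob_eq_one (hX j)).2 (hμX j)

def schrodingerDensity {ι : Type*} [Fintype ι] {α : ι → Type*} (φ : ∀ i, α i → ℝ)
    (c : (∀ i, α i) → ℝ) (x : ∀ i, α i) : ℝ :=
  Real.exp ((∑ i, φ i (x i)) - c x)

theorem schrodingerDensity_update {ι : Type*} [Fintype ι] [DecidableEq ι] {α : ι → Type*}
    (φ : ∀ i, α i → ℝ) (c : (∀ i, α i) → ℝ) (x : ∀ i, α i) (i : ι) (t : α i) :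
    schrodingerDensity φ c (update x i t)
      = Real.exp (φ i t) *
          Real.exp ((∑ j ∈ Finset.univ.erase i, φ j (x j)) - c (update x i t)) := by
  rw [schrodingerDensity, ← Real.exp_add, ← add_sub_assoc]
  simp_rw [apply_update φ, Finset.sum_update_of_mem (Finset.mem_univ i),
    Finset.sdiff_singleton_eq_erase]

theorem ContinuousOn.schrodingerDensity {ι : Type*} [Fintype ι] {α : ι → Type*}
    [∀ i, TopologicalSpace (α i)] {X : ∀ i, Set (α i)} {φ : ∀ i, α i → ℝ}
    {c : (∀ i, α i) → ℝ} (hφ : ∀ i, ContinuousOn (φ i) (X i)) (hc : ContinuousOn c (univ.pi X)) :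
    ContinuousOn (schrodingerDensity φ c) (univ.pi X) := by
  refine Real.continuous_exp.comp_continuousOn ((continuousOn_finsetSum _ fun i _ => ?_).sub hc)
  exact (hφ i).comp (continuous_apply i).continuousOn fun x hx => hx i (mem_univ i)

section Schrodinger

variable {N d : ℕ} {X : Fin N → Set (EuclideanSpace ℝ (Fin d))}
  {c : (Fin N → EuclideanSpace ℝ (Fin d)) → ℝ} {μ : Fin N → Measure (EuclideanSpace ℝ (Fin d))}
  [∀ i, IsProbabilityMeasure (μ i)] {φ : Fin N → EuclideanSpace ℝ (Fin d) → ℝ}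

theorem integrable_schrodingerDensity_update (hXcpt : ∀ i, IsCompact (X i))
    (hμX : ∀ i, μ i (X i) = 1) (hc : ContinuousOn c (univ.pi X))
    (hφ : ∀ i, ContinuousOn (φ i) (X i)) {i : Fin N} {t : EuclideanSpace ℝ (Fin d)} (ht : t ∈ X i) :
    Integrable (fun x => schrodingerDensity φ c (update x i t)) (Measure.pi μ) := by
  have hmaps : MapsTo (update · i t) (univ.pi X) (univ.pi X) := fun x hx =>
    (update_mem_pi_iff_of_mem hx).2 fun _ => ht
  refine ((ContinuousOn.schrodingerDensity hφ hc).comp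
    ((continuous_update i).comp (continuous_id.prodMk continuous_const)).continuousOn hmaps
    ).integrable_of_ae_mem (isCompact_univ_pi hXcpt) ?_
  exact ae_mem_univ_pi (fun j => (hXcpt j).isClosed.measurableSet) hμX

theorem IsSchrodingerSolution.integral_schrodingerDensity_update
    (hφ : IsSchrodingerSolution X c μ φ) (hXcpt : ∀ i, IsCompact (X i))
    (hμX : ∀ i, μ i (X i) = 1) (hc : ContinuousOn c (univ.pi X))
    {i : Fin N} {t : EuclideanSpace ℝ (Fin d)} (ht : t ∈ X i) :
    ∫ x, schrodingerDensity φ c (update x i t) ∂Measure.pi μ = 1 := by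
  set g := fun x : Fin N → EuclideanSpace ℝ (Fin d) =>
    (∑ j ∈ Finset.univ.erase i, φ j (x j)) - c (update x i t)
  have hint := integrable_schrodingerDensity_update hXcpt hμX hc hφ.1 ht
  simp_rw [schrodingerDensity_update] at hint ⊢
  have hg : Integrable (fun x => Real.exp (g x)) (Measure.pi μ) :=
    (integrable_const_mul_iff (Real.exp_pos _).ne'.isUnit _).1 hint
  -- `Real.log 0 = 0`: the equation determines the integral only once it is known to be positive.
  have hpos : 0 < ∫ x, Real.exp (g x) ∂Measure.pi μ := integral_exp_pos hg
  rw [integral_const_mul, hφ.2 i t ht, Real.exp_neg, Real.exp_log hpos, inv_mul_cancel₀ hpos.ne']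

theorem IsSchrodingerSolution.map_eval_withDensity (hφ : IsSchrodingerSolution X c μ φ)
    (hXcpt : ∀ i, IsCompact (X i)) (hμX : ∀ i, μ i (X i) = 1) (hc : ContinuousOn c (univ.pi X))
    (i : Fin N) :
    ((Measure.pi μ).withDensity
      (fun x => ENNReal.ofReal (schrodingerDensity φ c x))).map (fun x => x i) = μ i := by
  classical
  have hXmeas : ∀ j, MeasurableSet (X j) := fun j => (hXcpt j).isClosed.measurableSet
  have hae : ∀ᵐ x ∂Measure.pi μ, x ∈ univ.pi X := ae_mem_univ_pi hXmeas hμX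
  -- `φ` and `c` are only continuous on the `X i`, so the density itself need not be measurable.
  set F := (univ.pi X).piecewise (fun x => ENNReal.ofReal (schrodingerDensity φ c x)) 0
  have hF : Measurable F :=
    (ENNReal.continuous_ofReal.comp_continuousOn
      (.schrodingerDensity hφ.1 hc)).measurable_piecewise continuousOn_const (.univ_pi hXmeas)
  have hfibre : ∀ t ∈ X i, ∫⁻ x, F (update x i t) ∂Measure.pi μ = 1 := fun t ht =>
    calc ∫⁻ x, F (update x i t) ∂Measure.pi μ
        = ∫⁻ x, ENNReal.ofReal (schrodingerDensity φ c (update x i t)) ∂Measure.pi μ :=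
          lintegral_congr_ae <| hae.mono fun x hx =>
            piecewise_eq_of_mem _ _ _ ((update_mem_pi_iff_of_mem hx).2 fun _ => ht)
      _ = ENNReal.ofReal (∫ x, schrodingerDensity φ c (update x i t) ∂Measure.pi μ) :=
          (ofReal_integral_eq_lintegral_ofReal
            (integrable_schrodingerDensity_update hXcpt hμX hc hφ.1 ht)
            (.of_forall fun _ => (Real.exp_pos _).le)).symm
      _ = 1 := by rw [hφ.integral_schrodingerDensity_update hXcpt hμX hc ht, ENNReal.ofReal_one]
  calc ((Measure.pi μ).withDensity
        (fun x => ENNReal.ofReal (schrodingerDensity φ c x))).map (fun x => x i)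
      = ((Measure.pi μ).withDensity F).map (fun x => x i) := by
        rw [withDensity_congr_ae (hae.mono fun x hx => (piecewise_eq_of_mem _ _ _ hx).symm)]
    _ = (μ i).withDensity (fun t => ∫⁻ x, F (update x i t) ∂Measure.pi μ) :=
        map_eval_withDensity_pi μ i hF
    _ = μ i := by
        have haeX : ∀ᵐ t ∂μ i, t ∈ X i := (mem_ae_iff_prob_eq_one (hXmeas i)).2 (hμX i)
        rw [withDensity_congr_ae (haeX.mono hfibre), ← Pi.one_def, withDensity_one]

end Schrodinger

theorem schrodinger_primal_plan_marginals_general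
    (N d : ℕ) (hN : 2 ≤ N)
    (X : Fin N → Set (EuclideanSpace ℝ (Fin d)))
    (hXcpt : ∀ i, IsCompact (X i))
    (c : (Fin N → EuclideanSpace ℝ (Fin d)) → ℝ)
    (hc : ContinuousOn c (Set.univ.pi X))
    (μ : Fin N → Measure (EuclideanSpace ℝ (Fin d)))
    (hμp : ∀ i, IsProbabilityMeasure (μ i)) (hμs : ∀ i, μ i (X i) = 1)
    (φ : Fin N → EuclideanSpace ℝ (Fin d) → ℝ)
    (hφ : IsSchrodingerSolution X c μ φ)
    (γ : Measure (Fin N → EuclideanSpace ℝ (Fin d)))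
    (hγ : γ = (Measure.pi μ).withDensity
      (fun x => ENNReal.ofReal (Real.exp ((∑ i, φ i (x i)) - c x)))) :
    IsProbabilityMeasure γ ∧ ∀ i : Fin N, γ.map (fun x => x i) = μ i := by
  have hmarg : ∀ i, γ.map (fun x => x i) = μ i := fun i =>
    hγ ▸ hφ.map_eval_withDensity hXcpt hμs hc i
  let i₀ : Fin N := ⟨0, by omega⟩
  have : IsProbabilityMeasure (γ.map fun x => x i₀) := hmarg i₀ ▸ hμp i₀
  exact ⟨Measure.isProbabilityMeasure_of_map fun x => x i₀, hmarg⟩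

/-- If `φ` solves the Schrödinger system, then the measure
`γ = exp(Σ_i φ_i(x_i) − c(x)) · μ` is a probability measure on the product whose `i`-th
marginal is `μ_i` for every `i`. -/
theorem schrodinger_primal_plan_marginals
    (N d : ℕ) (hN : 2 ≤ N) (hd : 1 ≤ d)
    (X : Fin N → Set (EuclideanSpace ℝ (Fin d)))
    (hXne : ∀ i, (X i).Nonempty) (hXcpt : ∀ i, IsCompact (X i)) (hXcvx : ∀ i, Convex ℝ (X i))
    (c : (Fin N → EuclideanSpace ℝ (Fin d)) → ℝ)
    (hc : ContinuousOn c (Set.univ.pi X))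
    (μ : Fin N → Measure (EuclideanSpace ℝ (Fin d)))
    (hμp : ∀ i, IsProbabilityMeasure (μ i)) (hμs : ∀ i, μ i (X i) = 1)
    (φ : Fin N → EuclideanSpace ℝ (Fin d) → ℝ)
    (hφ : IsSchrodingerSolution X c μ φ)
    (γ : Measure (Fin N → EuclideanSpace ℝ (Fin d)))
    (hγ : γ = (Measure.pi μ).withDensity
      (fun x => ENNReal.ofReal (Real.exp ((∑ i, φ i (x i)) - c x)))) :
    IsProbabilityMeasure γ ∧ ∀ i : Fin N, γ.map (fun x => x i) = μ i :=
  schrodinger_primal_plan_marginals_general N d hN X hXcpt c hc μ hμp hμs φ hφ γ hγ
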